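/- arXiv:2408.00724 — 2 statements merged into one kernel-verified Lean document; each statement's English description precedes it below -/
import Mathlib

section
/- Let $A$ be a finite set and $p$ a distribution on $A$ with two distinct elements $y_1 \ne y_2$ satisfying $p(y_1) = p(y_2) = \max_y p(y)$. Let $X_1,\dots,X_n$ be i.i.d. with law $p$ and $f_n$ the empirical counts. Then $\liminf_n \mathbb{P}(f_n(y_1) > f_n(y_2)) > 0$ and $\liminf_n \mathbb{P}(f_n(y_2) > f_n(y_1)) > 0$; hence the majority-vote outcome does not converge almost surely. -/
open MeasureTheory ProbabilityTheory Filter Finset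

/-!
The margin `M n = #{i < n | X i = y1} - #{i < n | X i = y2}` is a random walk with i.i.d. steps
in `{-1, 0, 1}`. Swapping `y1` and `y2` preserves `p`, hence the joint law of the sequence `X`,
and negates `M n`; so `M n > 0` and `M n < 0` are equally likely. Given the past, `M (n + 1) = 0`
forces the next step to one prescribed value, and no step value is attained at both `y1` and
`y2`; so `P (M (n + 1) = 0) ≤ 1 - p y1`, and each strict ordering has probability at least
`p y1 / 2`, which is positive because `y1` is a mode of `p`.
-/

theorem ProbabilityTheory.IndepFun.measure_add_eq_le {Ω G : Type*} [MeasurableSpace Ω]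
    {μ : Measure Ω} [IsProbabilityMeasure μ] [AddGroup G] [MeasurableSpace G]
    [MeasurableAdd₂ G] [MeasurableSingletonClass G] {U V : Ω → G} (hUV : U ⟂ᵢ[μ] V)
    (hU : Measurable U) (hV : Measurable V) {c : ENNReal} (hc : ∀ g, μ (V ⁻¹' {g}) ≤ c)
    (k : G) : μ {ω | U ω + V ω = k} ≤ c := by
  have hT : MeasurableSet {z : G × G | z.1 + z.2 = k} :=
    measurable_add (measurableSet_singleton k)
  calc μ {ω | U ω + V ω = k}
      = (μ.map U).prod (μ.map V) {z : G × G | z.1 + z.2 = k} := by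
        rw [← (indepFun_iff_map_prod_eq_prod_map_map hU.aemeasurable hV.aemeasurable).mp hUV,
          Measure.map_apply (hU.prodMk hV) hT]
        rfl
    _ = ∫⁻ u, μ (V ⁻¹' {-u + k}) ∂μ.map U := by
        rw [Measure.prod_apply hT]
        refine lintegral_congr fun u => ?_
        have : Prod.mk u ⁻¹' {z : G × G | z.1 + z.2 = k} = {-u + k} := by
          ext v
          simp [eq_neg_add_iff_add_eq]
        rw [this, Measure.map_apply hV (measurableSet_singleton _)]
    _ ≤ ∫⁻ _, c ∂μ.map U := lintegral_mono fun u => hc _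
    _ = c := by simp [Measure.map_apply hU MeasurableSet.univ]

theorem ProbabilityTheory.iIndepFun.identDistrib_pi_comp {Ω ι A : Type*} [Countable ι]
    [MeasurableSpace Ω] [MeasurableSpace A] {μ : Measure Ω} {ν : Measure A}
    {X : ι → Ω → A} {e : A → A}
    (hindep : iIndepFun X μ) (hX : ∀ i, Measurable (X i)) (hlaw : ∀ i, μ.map (X i) = ν)
    (he : Measurable e) (heν : ν.map e = ν) :
    IdentDistrib (fun ω i => X i ω) (fun ω i => e (X i ω)) μ μ :=
  IdentDistrib.pi (fun i => ⟨(hX i).aemeasurable, (he.comp (hX i)).aemeasurable,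
      by rw [hlaw i, ← heν, ← hlaw i, Measure.map_map he (hX i)]; rfl⟩)
    hindep (hindep.comp _ fun _ => he)

section Swap

variable {A : Type*} [DecidableEq A]

theorem PMF.map_swap_of_eq (p : PMF A) {a b : A} (hab : p a = p b) :
    p.map (Equiv.swap a b) = p := by
  ext x
  simp only [PMF.map_apply, eq_comm (a := x), Equiv.swap_apply_eq_iff, tsum_ite_eq]
  rcases eq_or_ne x a with rfl | hxa
  · simp [hab]
  rcases eq_or_ne x b with rfl | hxb
  · simp [hab]
  · rw [Equiv.swap_apply_of_ne_of_ne hxa hxb]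

theorem Equiv.measurable_swap [MeasurableSpace A] [MeasurableSingletonClass A] (a b : A) :
    Measurable (Equiv.swap a b) := by
  rw [funext (Equiv.swap_apply_def a b)]
  exact measurable_const.ite (measurableSet_singleton a) <|
    measurable_const.ite (measurableSet_singleton b) measurable_id

end Swap

section Margin

variable {A : Type*} [DecidableEq A]

def signedVote (a b x : A) : ℤ := (if x = a then 1 else 0) - (if x = b then 1 else 0)

def margin (a b : A) (x : ℕ → A) (n : ℕ) : ℤ := ∑ i ∈ range n, signedVote a b (x i)

theorem signedVote_swap (a b x : A) : signedVote a b (Equiv.swap a b x) = -signedVote a b x := by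
  unfold signedVote
  rcases eq_or_ne x a with rfl | hxa
  · rcases eq_or_ne x b with rfl | hxb <;> simp [*, Ne.symm]
  rcases eq_or_ne x b with rfl | hxb
  · simp [hxa, Ne.symm hxa]
  · simp [Equiv.swap_apply_of_ne_of_ne hxa hxb, hxa, hxb]

theorem margin_comp_swap (a b : A) (x : ℕ → A) (n : ℕ) :
    margin a b (fun i => Equiv.swap a b (x i)) n = -margin a b x n := by
  simp only [margin, signedVote_swap, sum_neg_distrib]

theorem margin_eq_card_sub_card (a b : A) (x : ℕ → A) (n : ℕ) :
    margin a b x n = #{i ∈ range n | x i = a} - #{i ∈ range n | x i = b} := by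
  simp only [margin, signedVote, sum_sub_distrib, sum_boole]

variable [MeasurableSpace A] [MeasurableSingletonClass A]

theorem measurable_signedVote (a b : A) : Measurable (signedVote a b) :=
  (measurable_const.ite (measurableSet_singleton a) measurable_const).sub
    (measurable_const.ite (measurableSet_singleton b) measurable_const)

theorem measurable_margin (a b : A) (n : ℕ) : Measurable fun x : ℕ → A => margin a b x n :=
  Finset.measurable_sum _ fun i _ => (measurable_signedVote a b).comp (measurable_pi_apply i)

theorem PMF.toMeasure_signedVote_preimage_le (p : PMF A) {a b : A} (hab : a ≠ b)
    (heq : p a = p b) (j : ℤ) : p.toMeasure (signedVote a b ⁻¹' {j}) ≤ 1 - p a := by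
  have hsub : signedVote a b ⁻¹' {j} ⊆ {a}ᶜ ∨ signedVote a b ⁻¹' {j} ⊆ {b}ᶜ := by
    rcases eq_or_ne j 1 with rfl | hj
    · exact Or.inr fun x hx (hxb : x = b) => by simp [signedVote, hxb, hab.symm] at hx
    · exact Or.inl fun x hx (hxa : x = a) => hj (by simpa [signedVote, hxa, hab] using hx.symm)
  rcases hsub with h | h
  · calc _ ≤ p.toMeasure {a}ᶜ := measure_mono h
      _ = 1 - p a := by
        rw [prob_compl_eq_one_sub (measurableSet_singleton a),
          PMF.toMeasure_apply_singleton _ _ (measurableSet_singleton a)]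
  · calc _ ≤ p.toMeasure {b}ᶜ := measure_mono h
      _ = 1 - p a := by
        rw [prob_compl_eq_one_sub (measurableSet_singleton b),
          PMF.toMeasure_apply_singleton _ _ (measurableSet_singleton b), heq]

end Margin

section RandomMargin

variable {Ω A : Type*} [MeasurableSpace Ω] {μ : Measure Ω}
  [DecidableEq A] [MeasurableSpace A] [MeasurableSingletonClass A] {p : PMF A}
  {X : ℕ → Ω → A} {a b : A}

theorem measure_margin_pos_eq_measure_margin_neg (hX : ∀ i, Measurable (X i))
    (hindep : iIndepFun X μ) (hlaw : ∀ i, μ.map (X i) = p.toMeasure) (heq : p a = p b)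
    (n : ℕ) : μ {ω | 0 < margin a b (X · ω) n} = μ {ω | margin a b (X · ω) n < 0} := by
  have hswap : p.toMeasure.map (Equiv.swap a b) = p.toMeasure := by
    rw [PMF.toMeasure_map _ _ (Equiv.measurable_swap a b), p.map_swap_of_eq heq]
  have hneg := ((hindep.identDistrib_pi_comp hX hlaw (Equiv.measurable_swap a b)
    hswap).comp (measurable_margin a b n)).measure_mem_eq (measurableSet_Ioi (a := 0))
  simpa only [Function.comp_def, margin_comp_swap, Set.preimage, Set.mem_Ioi, neg_pos] using hneg

variable [IsProbabilityMeasure μ]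

theorem measure_margin_succ_eq_zero_le (hX : ∀ i, Measurable (X i))
    (hindep : iIndepFun X μ) (hlaw : ∀ i, μ.map (X i) = p.toMeasure) (hab : a ≠ b)
    (heq : p a = p b) (n : ℕ) : μ {ω | margin a b (X · ω) (n + 1) = 0} ≤ 1 - p a := by
  set Y : ℕ → Ω → ℤ := fun i ω => signedVote a b (X i ω)
  have hY : ∀ i, Measurable (Y i) := fun i => (measurable_signedVote a b).comp (hX i)
  have hYindep : iIndepFun Y μ := hindep.comp _ fun _ => measurable_signedVote a b
  have hlawY : ∀ j, μ (Y n ⁻¹' {j}) ≤ 1 - p a := fun j => by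
    change μ (X n ⁻¹' (signedVote a b ⁻¹' {j})) ≤ _
    rw [← Measure.map_apply (hX n) (measurable_signedVote a b (measurableSet_singleton j)),
      hlaw n]
    exact p.toMeasure_signedVote_preimage_le hab heq j
  have hstep := (hYindep.indepFun_sum_range_succ hY n).measure_add_eq_le
    (by fun_prop) (hY n) hlawY 0
  simpa [margin, sum_range_succ] using hstep

theorem measureReal_margin_succ_pos_ge (hX : ∀ i, Measurable (X i))
    (hindep : iIndepFun X μ) (hlaw : ∀ i, μ.map (X i) = p.toMeasure) (hab : a ≠ b)
    (heq : p a = p b) (n : ℕ) :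
    (p a).toReal / 2 ≤ μ.real {ω | 0 < margin a b (X · ω) (n + 1)} := by
  set M := fun ω => margin a b (X · ω) (n + 1)
  have hM : Measurable M := (measurable_margin a b (n + 1)).comp (measurable_pi_lambda _ hX)
  have hsymm : μ.real {ω | 0 < M ω} = μ.real {ω | M ω < 0} := by
    simp only [measureReal_def, measure_margin_pos_eq_measure_margin_neg hX hindep hlaw heq, M]
  have htie : μ.real {ω | M ω = 0} ≤ 1 - (p a).toReal := by
    rw [← ENNReal.toReal_one, ← ENNReal.toReal_sub_of_le (p.coe_le_one a) ENNReal.one_ne_top]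
    exact ENNReal.toReal_mono (by simp) (measure_margin_succ_eq_zero_le hX hindep hlaw hab heq n)
  have hsplit :
      μ.real {ω | 0 < M ω} + μ.real {ω | M ω < 0} = 1 - μ.real {ω | M ω = 0} := by
    have hdisj : Disjoint {ω | 0 < M ω} {ω | M ω < 0} :=
      Set.disjoint_left.2 fun ω (h : 0 < M ω) (h' : M ω < 0) => lt_asymm h h'
    rw [← measureReal_union hdisj (measurableSet_lt hM measurable_const),
      ← probReal_compl_eq_one_sub (s := {ω | M ω = 0}) (hM (measurableSet_singleton 0))]
    congr 1
    ext ω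
    simp [lt_or_lt_iff_ne, ne_comm]
  linarith

theorem liminf_measure_card_lt_card_pos (hX : ∀ i, Measurable (X i))
    (hindep : iIndepFun X μ) (hlaw : ∀ i, μ.map (X i) = p.toMeasure) (hab : a ≠ b)
    (heq : p a = p b) (hpos : 0 < p a) :
    0 < liminf (fun n => (μ {ω | #{i ∈ range n | X i ω = b}
      < #{i ∈ range n | X i ω = a}}).toReal) atTop := by
  have hε : 0 < (p a).toReal / 2 := half_pos (ENNReal.toReal_pos hpos.ne' (p.apply_ne_top a))
  refine hε.trans_le
    (le_liminf_of_le (isCoboundedUnder_ge_of_le _ fun _ => measureReal_le_one) ?_)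
  filter_upwards [eventually_ge_atTop 1] with n hn
  obtain ⟨m, rfl⟩ := Nat.exists_eq_add_of_le' hn
  refine (measureReal_margin_succ_pos_ge hX hindep hlaw hab heq m).trans_eq ?_
  simp only [measureReal_def, margin_eq_card_sub_card, sub_pos, Nat.cast_lt]

end RandomMargin

theorem stmt_9_general {A : Type*} [DecidableEq A]
    [MeasurableSpace A] [MeasurableSingletonClass A]
    {Ω : Type*} [MeasurableSpace Ω] (μ : Measure Ω) [IsProbabilityMeasure μ]
    (p : PMF A) (y1 y2 : A) (h12 : y1 ≠ y2) (heq : p y1 = p y2)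
    (hmax : ∀ y, p y ≤ p y1)
    (X : ℕ → Ω → A) (hX : ∀ i, Measurable (X i))
    (hindep : iIndepFun X μ)
    (hlaw : ∀ i, Measure.map (X i) μ = p.toMeasure) :
    0 < Filter.liminf (fun n => (μ {ω |
        ((Finset.range n).filter (fun i => X i ω = y2)).card
          < ((Finset.range n).filter (fun i => X i ω = y1)).card}).toReal) Filter.atTop
    ∧ 0 < Filter.liminf (fun n => (μ {ω |
        ((Finset.range n).filter (fun i => X i ω = y1)).card
          < ((Finset.range n).filter (fun i => X i ω = y2)).card}).toReal) Filter.atTop := by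
  have hpos : 0 < p y1 := by
    obtain ⟨y, hy⟩ := p.support_nonempty
    exact (pos_iff_ne_zero.2 hy).trans_le (hmax y)
  exact ⟨liminf_measure_card_lt_card_pos hX hindep hlaw h12 heq hpos,
    liminf_measure_card_lt_card_pos hX hindep hlaw h12.symm heq.symm (heq ▸ hpos)⟩

theorem stmt_9 {A : Type*} [Fintype A] [DecidableEq A]
    [MeasurableSpace A] [MeasurableSingletonClass A]
    {Ω : Type*} [MeasurableSpace Ω] (μ : Measure Ω) [IsProbabilityMeasure μ]
    (p : PMF A) (y1 y2 : A) (h12 : y1 ≠ y2) (heq : p y1 = p y2)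
    (hmax : ∀ y, p y ≤ p y1)
    (X : ℕ → Ω → A) (hX : ∀ i, Measurable (X i))
    (hindep : iIndepFun X μ)
    (hlaw : ∀ i, Measure.map (X i) μ = p.toMeasure) :
    0 < Filter.liminf (fun n => (μ {ω |
        ((Finset.range n).filter (fun i => X i ω = y2)).card
          < ((Finset.range n).filter (fun i => X i ω = y1)).card}).toReal) Filter.atTop
    ∧ 0 < Filter.liminf (fun n => (μ {ω |
        ((Finset.range n).filter (fun i => X i ω = y1)).card
          < ((Finset.range n).filter (fun i => X i ω = y2)).card}).toReal) Filter.atTop :=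
  stmt_9_general μ p y1 y2 h12 heq hmax X hX hindep hlaw
end

section
/- Let $A$ be a finite set, $p$ a distribution on $A$, and $\rho : A \to (0,\infty)$ a reward function. Suppose the true answer $y_0$ satisfies: $y_0$ is the unique maximizer of $y \mapsto p(y)\rho(y)$ but not a maximizer of $y \mapsto p(y)$. Then the limiting probability of weighted majority voting (with weights $\rho$) outputting $y_0$ equals $1$, while the limiting probability of unweighted majority voting outputting $y_0$ equals $0$. -/
/-!
By the strong law of large numbers, almost surely the empirical frequencies `#{i < n | X i = y} / n`
converge to `p y` for every `y`. The weighted score of `y` is `ρ y` times its count, so after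
dividing by `n` it converges to `p y * ρ y`; a strict inequality between these limits therefore
holds between the scores for all large `n`. Hence `y0` almost surely eventually wins the weighted
vote, while an answer `y` with `p y0 < p y` almost surely eventually outvotes it. Almost sure
eventual membership turns into convergence of the probabilities by dominated convergence.
-/

open MeasureTheory ProbabilityTheory Filter Finset Topology

section
variable {Ω ι : Type*} [MeasurableSpace Ω] {μ : Measure Ω} [IsProbabilityMeasure μ]
  {L : Filter ι} [L.IsCountablyGenerated] {s : ι → Set Ω}

lemma tendsto_measure_toReal_one_of_ae_eventually_mem (hs : ∀ i, MeasurableSet (s i))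
    (h : ∀ᵐ ω ∂μ, ∀ᶠ i in L, ω ∈ s i) : Tendsto (fun i => (μ (s i)).toReal) L (𝓝 1) := by
  have := tendsto_measure_of_ae_tendsto_indicator_of_isFiniteMeasure L MeasurableSet.univ hs
    (h.mono fun ω hω => hω.mono fun i hi => iff_of_true hi (Set.mem_univ ω))
  rw [measure_univ] at this
  have h2 := (ENNReal.tendsto_toReal ENNReal.one_ne_top).comp this
  rw [ENNReal.toReal_one] at h2
  exact h2

lemma tendsto_measure_toReal_zero_of_ae_eventually_notMem (hs : ∀ i, MeasurableSet (s i))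
    (h : ∀ᵐ ω ∂μ, ∀ᶠ i in L, ω ∉ s i) : Tendsto (fun i => (μ (s i)).toReal) L (𝓝 0) := by
  have := tendsto_measure_of_ae_tendsto_indicator_of_isFiniteMeasure L MeasurableSet.empty hs
    (h.mono fun ω hω => hω.mono fun i hi => iff_of_false hi (Set.notMem_empty ω))
  rw [measure_empty] at this
  have h2 := (ENNReal.tendsto_toReal ENNReal.zero_ne_top).comp this
  rw [ENNReal.toReal_zero] at h2
  exact h2

end

lemma Filter.Tendsto.eventually_lt_of_div_natCast {u v : ℕ → ℝ} {a b : ℝ}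
    (hu : Tendsto (fun n => u n / n) atTop (𝓝 a)) (hv : Tendsto (fun n => v n / n) atTop (𝓝 b))
    (hab : a < b) : ∀ᶠ n in atTop, u n < v n := by
  filter_upwards [hu.eventually_lt hv hab, eventually_gt_atTop 0] with n hn hn0
  exact (div_lt_div_iff_of_pos_right (Nat.cast_pos.2 hn0)).1 hn

lemma Finset.sum_ite_comp_eq_card_nsmul {ι α M : Type*} [DecidableEq α] [AddCommMonoid M]
    (s : Finset ι) (f : ι → α) (g : α → M) (y : α) :
    ∑ i ∈ s, (if f i = y then g (f i) else 0) = #{i ∈ s | f i = y} • g y := by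
  rw [← sum_filter, sum_congr rfl fun i hi => congrArg g (mem_filter.1 hi).2, sum_const]

section EmpiricalCount
variable {Ω A : Type*} [MeasurableSpace Ω] [DecidableEq A]

def empiricalCount (X : ℕ → Ω → A) (n : ℕ) (ω : Ω) (y : A) : ℕ := #{i ∈ range n | X i ω = y}

variable [MeasurableSpace A] [MeasurableSingletonClass A] {X : ℕ → Ω → A}

lemma measurable_empiricalCount (hX : ∀ i, Measurable (X i)) (n : ℕ) :
    Measurable (empiricalCount X n) := by
  refine measurable_pi_lambda _ fun y => ?_
  simp only [empiricalCount, card_filter]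
  exact Finset.measurable_sum _ fun i _ =>
    Measurable.ite (hX i (measurableSet_singleton y)) measurable_const measurable_const

lemma ae_tendsto_empiricalCount_div [Countable A] {μ : Measure Ω} (p : PMF A)
    (hX : ∀ i, Measurable (X i)) (hindep : iIndepFun X μ)
    (hlaw : ∀ i, Measure.map (X i) μ = p.toMeasure) :
    ∀ᵐ ω ∂μ, ∀ y, Tendsto (fun n => (empiricalCount X n ω y : ℝ) / n) atTop
      (𝓝 (p y).toReal) := by
  refine ae_all_iff.2 fun y => ?_
  let g : A → ℝ := ({y} : Set A).indicator 1
  have hg : Measurable g := measurable_const.indicator (measurableSet_singleton y)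
  have hident : ∀ i, IdentDistrib (g ∘ X i) (g ∘ X 0) μ μ := fun i =>
    IdentDistrib.comp ⟨(hX i).aemeasurable, (hX 0).aemeasurable, by rw [hlaw i, hlaw 0]⟩ hg
  have hmean : μ[g ∘ X 0] = (p y).toReal := by
    rw [Function.comp_def, ← integral_map (hX 0).aemeasurable hg.aestronglyMeasurable, hlaw 0,
      integral_indicator_one (measurableSet_singleton y), measureReal_def,
      PMF.toMeasure_apply_singleton p y (measurableSet_singleton y)]
  have hint : Integrable (g ∘ X 0) μ := by
    have : Integrable g (μ.map (X 0)) :=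
      hlaw 0 ▸ (integrable_const 1).indicator (measurableSet_singleton y)
    exact (integrable_map_measure this.aestronglyMeasurable (hX 0).aemeasurable).1 this
  have hslln := strong_law_ae_real (fun i => g ∘ X i) hint
    (fun i j hij => (hindep.indepFun hij).comp hg hg) hident
  rw [hmean] at hslln
  filter_upwards [hslln] with ω hω
  convert hω using 3 with n
  simp only [empiricalCount, Function.comp_apply, g, Set.indicator_apply, Set.mem_singleton_iff,
    Pi.one_apply, sum_boole]

end EmpiricalCount

theorem stmt_14_general {A : Type*} [Fintype A] [DecidableEq A]
    [MeasurableSpace A] [MeasurableSingletonClass A]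
    {Ω : Type*} [MeasurableSpace Ω] (μ : Measure Ω) [IsProbabilityMeasure μ]
    (p : PMF A) (ρ : A → ℝ) (y0 : A)
    (hwmax : ∀ y, y ≠ y0 → (p y).toReal * ρ y < (p y0).toReal * ρ y0)
    (hnotmax : ∃ y, p y0 < p y)
    (X : ℕ → Ω → A) (hX : ∀ i, Measurable (X i))
    (hindep : iIndepFun X μ)
    (hlaw : ∀ i, Measure.map (X i) μ = p.toMeasure) :
    Tendsto (fun n => (μ {ω | ∀ y, y ≠ y0 →
        (∑ i ∈ Finset.range n, if X i ω = y then ρ (X i ω) else 0)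
          < ∑ i ∈ Finset.range n, if X i ω = y0 then ρ (X i ω) else 0}).toReal)
      atTop (nhds 1)
    ∧ Tendsto (fun n => (μ {ω | ∀ y,
        ((Finset.range n).filter (fun i => X i ω = y)).card
          ≤ ((Finset.range n).filter (fun i => X i ω = y0)).card}).toReal)
      atTop (nhds 0) := by
  obtain ⟨y1, hy1⟩ := hnotmax
  have hfreq := ae_tendsto_empiricalCount_div p hX hindep hlaw
  have hmeas (P : (A → ℕ) → Prop) (n : ℕ) : MeasurableSet {ω | P (empiricalCount X n ω)} :=
    measurable_empiricalCount hX n (Set.to_countable _).measurableSet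
  simp only [sum_ite_comp_eq_card_nsmul, nsmul_eq_mul]
  constructor
  · refine tendsto_measure_toReal_one_of_ae_eventually_mem
      (hmeas fun c => ∀ y, y ≠ y0 → c y * ρ y < c y0 * ρ y0) ?_
    filter_upwards [hfreq] with ω hω
    have hscore (y : A) : Tendsto (fun n => (empiricalCount X n ω y : ℝ) * ρ y / n) atTop
        (𝓝 ((p y).toReal * ρ y)) := by
      simpa only [div_mul_eq_mul_div] using (hω y).mul_const (ρ y)
    refine eventually_all.2 fun y => ?_
    rcases eq_or_ne y y0 with rfl | hy
    · exact .of_forall fun _ h => absurd rfl h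
    · filter_upwards [(hscore y).eventually_lt_of_div_natCast (hscore y0) (hwmax y hy)]
        with n hn _ using hn
  · refine tendsto_measure_toReal_zero_of_ae_eventually_notMem (hmeas fun c => ∀ y, c y ≤ c y0) ?_
    filter_upwards [hfreq] with ω hω
    filter_upwards [(hω y0).eventually_lt_of_div_natCast (hω y1)
      (ENNReal.toReal_strict_mono (p.apply_ne_top y1) hy1)] with n hn
    exact fun h => (h y1).not_gt (by exact_mod_cast hn)

theorem stmt_14 {A : Type*} [Fintype A] [Nonempty A] [DecidableEq A]
    [MeasurableSpace A] [MeasurableSingletonClass A]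
    {Ω : Type*} [MeasurableSpace Ω] (μ : Measure Ω) [IsProbabilityMeasure μ]
    (p : PMF A) (ρ : A → ℝ) (hρ : ∀ y, 0 < ρ y) (y0 : A)
    (hwmax : ∀ y, y ≠ y0 → (p y).toReal * ρ y < (p y0).toReal * ρ y0)
    (hnotmax : ∃ y, p y0 < p y)
    (X : ℕ → Ω → A) (hX : ∀ i, Measurable (X i))
    (hindep : iIndepFun X μ)
    (hlaw : ∀ i, Measure.map (X i) μ = p.toMeasure) :
    Tendsto (fun n => (μ {ω | ∀ y, y ≠ y0 →
        (∑ i ∈ Finset.range n, if X i ω = y then ρ (X i ω) else 0)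
          < ∑ i ∈ Finset.range n, if X i ω = y0 then ρ (X i ω) else 0}).toReal)
      atTop (nhds 1)
    ∧ Tendsto (fun n => (μ {ω | ∀ y,
        ((Finset.range n).filter (fun i => X i ω = y)).card
          ≤ ((Finset.range n).filter (fun i => X i ω = y0)).card}).toReal)
      atTop (nhds 0) :=
  stmt_14_general μ p ρ y0 hwmax hnotmax X hX hindep hlaw
end
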